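/- arXiv:math/0605561 — 3 statements merged into one kernel-verified Lean document; each statement's English description precedes it below -/
import Mathlib

section
/- Define D₃(ν) as 9·(ν(ν⁴−80)cos ν − ν(ν⁴−80)cosh ν + 80(ν²−4)cosh(ν/2)sin(ν/2) − 5(ν⁴+8ν²−32)sin ν + 80(ν²+4)cos(ν/2)sinh(ν/2) + 5(ν⁴−8ν²−32)sinh ν) / (160 ν⁹ (cos ν − cosh ν)). Then ν⁴·D₃(ν) tends to a finite positive limit as ν → ∞. -/
/-!
Divide the numerator and the denominator of `ν⁴ D₃(ν)` by `ν⁵ cosh ν`. In the numerator every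
term other than `-ν⁵ cosh ν` is either `ν(ν⁴ - 80) cos ν = o(ν⁵ cosh ν)` or a polynomial of
degree at most 4 times a function bounded by `cosh`, so the numerator is `~ -ν⁵ cosh ν`; the
denominator `160 ν⁹ (cos ν - cosh ν)` is `~ -160 ν⁹ cosh ν`. Hence `ν⁴ D₃(ν) → 9/160`.
-/

noncomputable def D3 (ν : ℝ) : ℝ :=
  (9 * (ν * (ν ^ 4 - 80) * Real.cos ν - ν * (ν ^ 4 - 80) * Real.cosh ν +
    80 * (ν ^ 2 - 4) * Real.cosh (ν / 2) * Real.sin (ν / 2) -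
    5 * (ν ^ 4 + 8 * ν ^ 2 - 32) * Real.sin ν +
    80 * (ν ^ 2 + 4) * Real.cos (ν / 2) * Real.sinh (ν / 2) +
    5 * (ν ^ 4 - 8 * ν ^ 2 - 32) * Real.sinh ν)) /
    (160 * ν ^ 9 * (Real.cos ν - Real.cosh ν))

open Filter Topology Asymptotics Polynomial Real

namespace Real

theorem abs_sinh_le_cosh (x : ℝ) : |sinh x| ≤ cosh x := by
  rw [abs_sinh, ← cosh_abs x]
  exact (sinh_lt_cosh _).le

theorem cos_lt_cosh {x : ℝ} (hx : x ≠ 0) : cos x < cosh x :=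
  (cos_le_one x).trans_lt (one_lt_cosh.2 hx)

theorem tendsto_cosh_atTop : Tendsto cosh atTop atTop := by
  refine tendsto_atTop_mono (fun x => ?_) (tendsto_exp_atTop.atTop_div_const two_pos)
  rw [cosh_eq]
  linarith [exp_pos (-x)]

theorem one_isLittleO_cosh : (fun _ => (1 : ℝ)) =o[atTop] cosh :=
  (isLittleO_one_left_iff ℝ).2 <| tendsto_norm_atTop_atTop.comp tendsto_cosh_atTop

theorem cos_isLittleO_cosh : cos =o[atTop] cosh :=
  (isBigO_of_le _ fun x => by simpa using abs_cos_le_one x).trans_isLittleO one_isLittleO_cosh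

section BoundedByCosh

variable {l : Filter ℝ}

theorem sin_isBigO_cosh : sin =O[l] cosh :=
  isBigO_of_le _ fun x => by
    simpa [abs_of_pos (cosh_pos x)] using (abs_sin_le_one x).trans (one_le_cosh x)

theorem sinh_isBigO_cosh : sinh =O[l] cosh :=
  isBigO_of_le _ fun x => by simpa [abs_of_pos (cosh_pos x)] using abs_sinh_le_cosh x

theorem cosh_half_le_cosh (x : ℝ) : cosh (x / 2) ≤ cosh x :=
  cosh_le_cosh.2 (by rw [abs_div]; linarith [abs_nonneg x])

theorem cosh_half_mul_sin_half_isBigO_cosh :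
    (fun x => cosh (x / 2) * sin (x / 2)) =O[l] cosh := by
  refine isBigO_of_le _ fun x => ?_
  simp only [norm_mul, norm_eq_abs, abs_of_pos (cosh_pos _)]
  nlinarith [cosh_half_le_cosh x, abs_sin_le_one (x / 2), cosh_pos (x / 2),
    abs_nonneg (sin (x / 2))]

theorem cos_half_mul_sinh_half_isBigO_cosh :
    (fun x => cos (x / 2) * sinh (x / 2)) =O[l] cosh := by
  refine isBigO_of_le _ fun x => ?_
  simp only [norm_mul, norm_eq_abs, abs_of_pos (cosh_pos x)]
  nlinarith [cosh_half_le_cosh x, abs_cos_le_one (x / 2), abs_sinh_le_cosh (x / 2),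
    abs_nonneg (sinh (x / 2)), abs_nonneg (cos (x / 2))]

end BoundedByCosh

end Real

section PolynomialAsymptotics

variable {𝕜 : Type*} [NormedField 𝕜] [LinearOrder 𝕜] [IsStrictOrderedRing 𝕜] [OrderTopology 𝕜]
  {f : 𝕜 → 𝕜} {n : ℕ}

theorem isLittleO_pow_atTop_of_degree_lt (P : 𝕜[X]) (hf : ∀ x, f x = P.eval x)
    (hP : P.degree < n) : f =o[atTop] (· ^ n) := by
  simpa [funext hf] using P.isLittleO_atTop_of_degree_lt (X ^ n) (by simpa using hP)

theorem isBigO_pow_atTop_of_degree_le (P : 𝕜[X]) (hf : ∀ x, f x = P.eval x)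
    (hP : P.degree ≤ n) : f =O[atTop] (· ^ n) := by
  simpa [funext hf] using P.isBigO_atTop_of_degree_le (X ^ n) (by simpa using hP)

end PolynomialAsymptotics

noncomputable def D3Numerator (ν : ℝ) : ℝ :=
  ν * (ν ^ 4 - 80) * cos ν - ν * (ν ^ 4 - 80) * cosh ν +
    80 * (ν ^ 2 - 4) * cosh (ν / 2) * sin (ν / 2) - 5 * (ν ^ 4 + 8 * ν ^ 2 - 32) * sin ν +
    80 * (ν ^ 2 + 4) * cos (ν / 2) * sinh (ν / 2) + 5 * (ν ^ 4 - 8 * ν ^ 2 - 32) * sinh ν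

theorem pow_four_mul_D3 {ν : ℝ} (hν : ν ≠ 0) :
    ν ^ 4 * D3 ν = 9 / 160 * (D3Numerator ν / (ν ^ 5 * (cos ν - cosh ν))) := by
  rw [D3, ← D3Numerator]
  field_simp

theorem D3Numerator_isEquivalent : D3Numerator ~[atTop] fun ν => -(ν ^ 5 * cosh ν) := by
  have h₁ := (isBigO_pow_atTop_of_degree_le (f := fun ν => ν * (ν ^ 4 - 80)) (n := 5)
    (X * (X ^ 4 - C 80)) (by simp) (by compute_degree!)).mul_isLittleO cos_isLittleO_cosh
  have h₂ := (isLittleO_pow_atTop_of_degree_lt (f := fun ν => 80 * ν) (n := 5)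
    (C 80 * X) (by simp) (by compute_degree!)).mul_isBigO (isBigO_refl cosh atTop)
  have h₃ := (isLittleO_pow_atTop_of_degree_lt (f := fun ν => 80 * (ν ^ 2 - 4)) (n := 5)
    (C 80 * (X ^ 2 - C 4)) (by simp) (by compute_degree!)).mul_isBigO
      cosh_half_mul_sin_half_isBigO_cosh
  have h₄ := (isLittleO_pow_atTop_of_degree_lt (f := fun ν => 5 * (ν ^ 4 + 8 * ν ^ 2 - 32))
    (n := 5) (C 5 * (X ^ 4 + C 8 * X ^ 2 - C 32)) (by simp) (by compute_degree!)).mul_isBigO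
      sin_isBigO_cosh
  have h₅ := (isLittleO_pow_atTop_of_degree_lt (f := fun ν => 80 * (ν ^ 2 + 4)) (n := 5)
    (C 80 * (X ^ 2 + C 4)) (by simp) (by compute_degree!)).mul_isBigO
      cos_half_mul_sinh_half_isBigO_cosh
  have h₆ := (isLittleO_pow_atTop_of_degree_lt (f := fun ν => 5 * (ν ^ 4 - 8 * ν ^ 2 - 32))
    (n := 5) (C 5 * (X ^ 4 - C 8 * X ^ 2 - C 32)) (by simp) (by compute_degree!)).mul_isBigO
      sinh_isBigO_cosh
  refine IsLittleO.neg_right ((((((h₁.add h₂).add h₃).sub h₄).add h₅).add h₆).congr_left ?_)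
  intro ν
  simp only [D3Numerator, Pi.sub_apply]
  ring

theorem pow_five_mul_cos_sub_cosh_isEquivalent :
    (fun ν => ν ^ 5 * (cos ν - cosh ν)) ~[atTop] fun ν => -(ν ^ 5 * cosh ν) := by
  refine ((isBigO_refl (· ^ 5) atTop).mul_isLittleO cos_isLittleO_cosh).neg_right.congr_left ?_
  intro ν
  simp only [Pi.sub_apply]
  ring

/-- For the power-law case `n = 3`, `ν⁴ D₃(ν)` tends to a finite positive
limit as `ν → ∞`. -/
theorem D3_large_nu :
    ∃ L : ℝ, 0 < L ∧
      Filter.Tendsto (fun ν => ν ^ 4 * D3 ν) Filter.atTop (nhds L) := by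
  refine ⟨9 / 160, by norm_num, ?_⟩
  have hden : ∀ᶠ ν in atTop, ν ^ 5 * (cos ν - cosh ν) ≠ 0 := by
    filter_upwards [eventually_gt_atTop 0] with ν hν
    exact mul_ne_zero (pow_ne_zero 5 hν.ne') (sub_ne_zero.2 (cos_lt_cosh hν.ne').ne)
  have hratio := (isEquivalent_iff_tendsto_one hden).1
    (D3Numerator_isEquivalent.trans pow_five_mul_cos_sub_cosh_isEquivalent.symm)
  have hlim := hratio.const_mul (9 / 160)
  rw [mul_one] at hlim
  refine hlim.congr' ?_
  filter_upwards [eventually_ne_atTop 0] with ν hν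
  exact (pow_four_mul_D3 hν).symm
end

section
/- Define D₄(ν) = (ν(ν⁴−672)cos ν − ν(ν⁴−672)cosh ν − 7(ν⁴+24ν²−144)sin ν + 7(ν⁴−24ν²−144)sinh ν) / (56 ν⁹ (cos ν − cosh ν)). Then D₄(ν) → 0 as ν → ∞, and ν⁴·D₄(ν) converges to 1/8 as ν → ∞. -/
noncomputable def D4 (ν : ℝ) : ℝ :=
  (ν * (ν ^ 4 - 672) * Real.cos ν - ν * (ν ^ 4 - 672) * Real.cosh ν -
    7 * (ν ^ 4 + 24 * ν ^ 2 - 144) * Real.sin ν +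
    7 * (ν ^ 4 - 24 * ν ^ 2 - 144) * Real.sinh ν) /
    (56 * ν ^ 9 * (Real.cos ν - Real.cosh ν))

open Filter Real

private lemma coshsubcos_atTop :
    Tendsto (fun ν : ℝ => Real.cosh ν - Real.cos ν) atTop atTop := by
  apply tendsto_atTop_mono (g := fun ν : ℝ => Real.cosh ν - Real.cos ν)
    (f := fun ν : ℝ => Real.exp ν / 2 + (-1)) _
    (tendsto_atTop_add_const_right _ (-1)
      ((Real.tendsto_exp_atTop).atTop_div_const two_pos))
  intro ν
  have h1 := Real.cosh_eq ν
  have h2 := Real.exp_pos (-ν)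
  have h3 := Real.cos_le_one ν
  nlinarith

private lemma inv_tendsto :
    Tendsto (fun ν : ℝ => (Real.cos ν - Real.cosh ν)⁻¹) atTop (nhds 0) := by
  have : (fun ν : ℝ => (Real.cos ν - Real.cosh ν)⁻¹)
      = fun ν : ℝ => -((Real.cosh ν - Real.cos ν)⁻¹) := by
    funext ν; rw [← inv_neg, neg_sub]
  rw [this]
  simpa using coshsubcos_atTop.inv_tendsto_atTop.neg

set_option maxHeartbeats 1600000 in
/-- For the power-law case `n = 4`, `D₄(ν) → 0` and `ν⁴ D₄(ν) → 1/56`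
(the correct constant, agreeing with `n²/(2^{2n-1}(2n-1)) = 1/56`) as `ν → ∞`. -/
theorem D4_large_nu :
    Filter.Tendsto D4 Filter.atTop (nhds 0) ∧
      Filter.Tendsto (fun ν => ν ^ 4 * D4 ν) Filter.atTop (nhds (1 / 56)) := by
  have hinv := inv_tendsto
  -- the limit of the model expression
  have h1 : Tendsto (fun ν : ℝ => ν⁻¹) atTop (nhds 0) := tendsto_inv_atTop_zero
  have h3 : Tendsto (fun ν : ℝ => (ν ^ 3)⁻¹) atTop (nhds 0) :=
    (tendsto_pow_atTop (by norm_num)).inv_tendsto_atTop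
  have h4 : Tendsto (fun ν : ℝ => (ν ^ 4)⁻¹) atTop (nhds 0) :=
    (tendsto_pow_atTop (by norm_num)).inv_tendsto_atTop
  have h5 : Tendsto (fun ν : ℝ => (ν ^ 5)⁻¹) atTop (nhds 0) :=
    (tendsto_pow_atTop (by norm_num)).inv_tendsto_atTop
  have hsin : Tendsto (fun ν : ℝ => Real.sin ν * (Real.cos ν - Real.cosh ν)⁻¹)
      atTop (nhds 0) := by
    apply bdd_le_mul_tendsto_zero' 1 _ hinv
    filter_upwards with ν using Real.abs_sin_le_one ν
  have hH : Tendsto (fun ν : ℝ =>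
      -1 + (Real.cos ν - Real.exp (-ν)) * (Real.cos ν - Real.cosh ν)⁻¹)
      atTop (nhds (-1)) := by
    have : Tendsto (fun ν : ℝ =>
        (Real.cos ν - Real.exp (-ν)) * (Real.cos ν - Real.cosh ν)⁻¹) atTop (nhds 0) := by
      apply bdd_le_mul_tendsto_zero' 2 _ hinv
      filter_upwards [eventually_ge_atTop (0:ℝ)] with ν hν
      have h1 : |Real.cos ν| ≤ 1 := Real.abs_cos_le_one ν
      have h2 : Real.exp (-ν) ≤ 1 := Real.exp_le_one_iff.mpr (by linarith)
      have h3 := Real.exp_pos (-ν)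
      rw [abs_le] at h1 ⊢
      constructor <;> linarith [h1.1, h1.2]
    simpa using (tendsto_const_nhds (x := (-1:ℝ))).add this
  have hB : Tendsto (fun ν : ℝ => -(1/8) * ν⁻¹ - 3 * (ν ^ 3)⁻¹ + 18 * (ν ^ 5)⁻¹)
      atTop (nhds 0) := by
    have := ((h1.const_mul (-(1/8):ℝ)).sub (h3.const_mul (3:ℝ))).add (h5.const_mul (18:ℝ))
    simpa using this
  have hC : Tendsto (fun ν : ℝ => (1/8) * ν⁻¹ - 3 * (ν ^ 3)⁻¹ - 18 * (ν ^ 5)⁻¹)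
      atTop (nhds 0) := by
    have := ((h1.const_mul ((1/8):ℝ)).sub (h3.const_mul (3:ℝ))).sub (h5.const_mul (18:ℝ))
    simpa using this
  have hA : Tendsto (fun ν : ℝ => 1/56 - 12 * (ν ^ 4)⁻¹) atTop (nhds (1/56)) := by
    have := (tendsto_const_nhds (x := (1/56:ℝ))).sub (h4.const_mul (12:ℝ))
    simpa using this
  have hmodel : Tendsto (fun ν : ℝ =>
      (1/56 - 12 * (ν ^ 4)⁻¹)
      + (-(1/8) * ν⁻¹ - 3 * (ν ^ 3)⁻¹ + 18 * (ν ^ 5)⁻¹)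
          * (Real.sin ν * (Real.cos ν - Real.cosh ν)⁻¹)
      + ((1/8) * ν⁻¹ - 3 * (ν ^ 3)⁻¹ - 18 * (ν ^ 5)⁻¹)
          * (-1 + (Real.cos ν - Real.exp (-ν)) * (Real.cos ν - Real.cosh ν)⁻¹))
      atTop (nhds (1/56)) := by
    have := (hA.add (hB.mul hsin)).add (hC.mul hH)
    simpa using this
  -- eventual equality with ν⁴ D₄
  have heq : ∀ᶠ ν : ℝ in atTop, ν ^ 4 * D4 ν =
      (1/56 - 12 * (ν ^ 4)⁻¹)
      + (-(1/8) * ν⁻¹ - 3 * (ν ^ 3)⁻¹ + 18 * (ν ^ 5)⁻¹)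
          * (Real.sin ν * (Real.cos ν - Real.cosh ν)⁻¹)
      + ((1/8) * ν⁻¹ - 3 * (ν ^ 3)⁻¹ - 18 * (ν ^ 5)⁻¹)
          * (-1 + (Real.cos ν - Real.exp (-ν)) * (Real.cos ν - Real.cosh ν)⁻¹) := by
    filter_upwards [eventually_gt_atTop (0:ℝ)] with ν hν
    have hνne : ν ≠ 0 := ne_of_gt hν
    have hcc : Real.cos ν - Real.cosh ν ≠ 0 := by
      have : 1 < Real.cosh ν := Real.one_lt_cosh.mpr hνne
      have := Real.cos_le_one ν
      intro h; nlinarith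
    unfold D4
    field_simp
    rw [show Real.exp (-ν) = Real.cosh ν - Real.sinh ν from (Real.cosh_sub_sinh ν).symm]
    ring
  have hT2 : Tendsto (fun ν : ℝ => ν ^ 4 * D4 ν) atTop (nhds (1/56)) :=
    hmodel.congr' (heq.mono fun ν h => h.symm)
  refine ⟨?_, hT2⟩
  have heq0 : ∀ᶠ ν : ℝ in atTop, (ν ^ 4 * D4 ν) * (ν ^ 4)⁻¹ = D4 ν := by
    filter_upwards [eventually_gt_atTop (0:ℝ)] with ν hν
    field_simp
  have := hT2.mul h4
  simpa using this.congr' heq0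
end

section
/- For ν > 0, the numerator N(ν) = ν·cos ν + ν·cosh ν − sin ν − sinh ν of d₁ satisfies N(ν) > 0 for all ν in (0, ν₀) where ν₀ is the first positive zero of cos ν + cosh ν; hence d₁(ν) > 0 on (0, ν₀). -/
/-! `N(0) = 0` and `N'(ν) = ν (sinh ν - sin ν) > 0` for `ν > 0` because
`sin ν < ν < sinh ν`, so `N` is positive on `(0, ∞)`. The factor `cos ν + cosh ν` of the
denominator equals `2` at `0`, so by the intermediate value theorem it stays positive up to its
first positive zero `ν₀`. -/

open Real Set

lemma hasDerivAt_mul_cos_add_mul_cosh_sub_sin_sub_sinh (x : ℝ) :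
    HasDerivAt (fun ν : ℝ => ν * cos ν + ν * cosh ν - sin ν - sinh ν)
      (x * (sinh x - sin x)) x := by
  have h := ((((hasDerivAt_id x).mul (hasDerivAt_cos x)).add
    ((hasDerivAt_id x).mul (hasDerivAt_cosh x))).sub (hasDerivAt_sin x)).sub (hasDerivAt_sinh x)
  exact h.congr_deriv (by simp only [id]; ring)

lemma sin_lt_sinh {x : ℝ} (hx : 0 < x) : sin x < sinh x :=
  (sin_lt hx).trans (self_lt_sinh_iff.mpr hx)

lemma mul_cos_add_mul_cosh_sub_sin_sub_sinh_pos {x : ℝ} (hx : 0 < x) :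
    0 < x * cos x + x * cosh x - sin x - sinh x := by
  have hmono :
      StrictMonoOn (fun ν : ℝ => ν * cos ν + ν * cosh ν - sin ν - sinh ν) (Ici 0) := by
    refine strictMonoOn_of_deriv_pos (convex_Ici 0) (by fun_prop) fun y hy => ?_
    rw [interior_Ici] at hy
    rw [(hasDerivAt_mul_cos_add_mul_cosh_sub_sin_sub_sinh y).deriv]
    exact mul_pos hy (sub_pos.mpr (sin_lt_sinh hy))
  simpa using hmono self_mem_Ici hx.le hx

lemma ContinuousOn.pos_of_forall_ne_zero {f : ℝ → ℝ} {a b : ℝ} (hab : a ≤ b)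
    (hf : ContinuousOn f (Icc a b)) (ha : 0 < f a) (hne : ∀ x ∈ Ioc a b, f x ≠ 0) :
    0 < f b := by
  by_contra! hb
  obtain ⟨c, hc, hfc⟩ := intermediate_value_Icc' hab hf ⟨hb, ha.le⟩
  have hca : c ≠ a := by rintro rfl; exact ha.ne' hfc
  exact hne c ⟨lt_of_le_of_ne hc.1 hca.symm, hc.2⟩ hfc

lemma cos_add_cosh_pos_of_lt_first_zero {ν0 ν : ℝ}
    (hν0 : IsLeast {ν : ℝ | 0 < ν ∧ cos ν + cosh ν = 0} ν0) (hν : ν ∈ Ioo 0 ν0) :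
    0 < cos ν + cosh ν :=
  ContinuousOn.pos_of_forall_ne_zero (f := fun x => cos x + cosh x) hν.1.le (by fun_prop)
    (by norm_num) fun x hx hx0 => (hν0.2 ⟨hx.1, hx0⟩).not_gt (hx.2.trans_lt hν.2)

/-- The numerator `N(ν) = ν cos ν + ν cosh ν - sin ν - sinh ν` of `d₁` is
positive on `(0, ν₀)` where `ν₀` is the first positive zero of
`cos ν + cosh ν`; hence `d₁ > 0` there. -/
theorem d1_numerator_pos (ν0 : ℝ)
    (hν0 : IsLeast {ν : ℝ | 0 < ν ∧ Real.cos ν + Real.cosh ν = 0} ν0) :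
    (∀ ν ∈ Set.Ioo (0:ℝ) ν0,
        0 < ν * Real.cos ν + ν * Real.cosh ν - Real.sin ν - Real.sinh ν) ∧
      ∀ ν ∈ Set.Ioo (0:ℝ) ν0,
        0 < (ν * Real.cos ν + ν * Real.cosh ν - Real.sin ν - Real.sinh ν) /
              (2 * ν ^ 5 * (Real.cos ν + Real.cosh ν)) := by
  refine ⟨fun ν hν => mul_cos_add_mul_cosh_sub_sin_sub_sinh_pos hν.1, fun ν hν => ?_⟩
  exact div_pos (mul_cos_add_mul_cosh_sub_sin_sub_sinh_pos hν.1)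
    (mul_pos (mul_pos two_pos (pow_pos hν.1 5)) (cos_add_cosh_pos_of_lt_first_zero hν0 hν))
end
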